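/- Let α = (α_1,…,α_N) ∈ ℂ^N and let (f,g) ∈ S̃(α). If the mixed frame operator TU* has only one eigenvalue, i.e. its characteristic polynomial equals (X − λ)^d for some λ ∈ ℂ, then FP(f,g) = (1/d)·(∑_{m=1}^N α_m)². In particular this holds when TU* = (1/d)(∑_{m=1}^N α_m)·Id. -/

import Mathlib

open scoped ComplexInnerProductSpace

/- `H` is a complex inner product space of finite dimension `d = Module.finrank ℂ H`.
The paper's inner product `⟨x, y⟩` is linear in the first argument, hence it corresponds to
Mathlib's `⟪y, x⟫ = inner y x` (Mathlib's inner product is linear in the second argument). -/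
variable {H : Type*} [NormedAddCommGroup H] [InnerProductSpace ℂ H] [FiniteDimensional ℂ H]

/-- The mixed frame operator `TU⋆ : x ↦ ∑ m, ⟨x, g m⟩ f m` (paper convention),
i.e. `x ↦ ∑ m, ⟪g m, x⟫ • f m` in Mathlib's convention. Note that `UT⋆` for the pair
`(f, g)` is then `mixedOp g f`. -/
noncomputable def mixedOp {N : ℕ} (f g : Fin N → H) : H →ₗ[ℂ] H where
  toFun x := ∑ m, (⟪g m, x⟫) • f m
  map_add' x y := by
    simp [inner_add_right, add_smul, Finset.sum_add_distrib]
  map_smul' c x := by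
    simp [inner_smul_right, mul_smul, Finset.smul_sum]

/-- The mixed frame potential `FP(f,g) = ∑ m, ∑ n, ⟨f m, g n⟩ * ⟨f n, g m⟩`
(paper convention: inner product linear in the first argument). -/
noncomputable def mixedFP {N : ℕ} (f g : Fin N → H) : ℂ :=
  ∑ m, ∑ n, ⟪g n, f m⟫ * ⟪g m, f n⟫

/-! The frame potential is the trace of the square of the mixed frame operator. If that operator
has a single eigenvalue `λ`, it is `λ` plus a nilpotent commuting with it, so
`tr (TU⋆) = d λ` and `tr ((TU⋆)²) = d λ²`; since `tr (TU⋆) = ∑ α m`, this gives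
`FP = d λ² = (1/d) (∑ α m)²`. -/

open Polynomial in
theorem Module.End.isNilpotent_sub_algebraMap_of_charpoly_eq {R M : Type*} [CommRing R]
    [AddCommGroup M] [Module R M] [Module.Free R M] [Module.Finite R M]
    {A : Module.End R M} {μ : R} {n : ℕ} (hA : A.charpoly = (X - C μ) ^ n) :
    IsNilpotent (A - algebraMap R _ μ) :=
  ⟨n, by simpa [hA] using A.aeval_self_charpoly⟩

theorem Module.End.finrank_mul_trace_comp_self_of_isNilpotent_sub_algebraMap {R M : Type*}
    [CommRing R] [IsReduced R] [AddCommGroup M] [Module R M] [Module.Free R M]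
    [Module.Finite R M] {A : Module.End R M} {μ : R} (hA : IsNilpotent (A - algebraMap R _ μ)) :
    Module.finrank R M * LinearMap.trace R M (A ∘ₗ A) = LinearMap.trace R M A ^ 2 := by
  have htrace : LinearMap.trace R M A = μ * Module.finrank R M := by
    have h := LinearMap.trace_comp_eq_mul_of_commute_of_isNilpotent μ (Commute.one_left A) hA
    rwa [Module.End.one_eq_id, LinearMap.id_comp, LinearMap.trace_id] at h
  rw [LinearMap.trace_comp_eq_mul_of_commute_of_isNilpotent μ (Commute.refl A) hA, htrace]
  ring

section MixedFrame

variable {N : ℕ}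

theorem trace_mixedOp (f g : Fin N → H) :
    LinearMap.trace ℂ H (mixedOp f g) = ∑ m, ⟪g m, f m⟫ := by
  have hrankOne : mixedOp f g = ∑ m, (innerₛₗ ℂ (g m)).smulRight (f m) := by
    ext x
    simp [mixedOp]
  simp [hrankOne]

theorem trace_mixedOp_comp_self (f g : Fin N → H) :
    LinearMap.trace ℂ H (mixedOp f g ∘ₗ mixedOp f g) = mixedFP f g := by
  have hcomp : mixedOp f g ∘ₗ mixedOp f g = mixedOp (mixedOp f g ∘ f) g := by
    ext x
    show mixedOp f g (∑ m, ⟪g m, x⟫ • f m) = ∑ m, ⟪g m, x⟫ • mixedOp f g (f m)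
    simp only [map_sum, map_smul]
  rw [hcomp, trace_mixedOp]
  simp only [mixedFP, Function.comp_apply, mixedOp, LinearMap.coe_mk, AddHom.coe_mk, inner_sum,
    inner_smul_right]

end MixedFrame

open Polynomial in
/-- if `TU⋆` has only one eigenvalue, i.e. its characteristic polynomial is
`(X - λ)^d`, then `FP(f,g) = (1/d) (∑ α m)²`; in particular this holds when
`TU⋆ = ((1/d) ∑ α m) • Id`. -/
theorem mixedFP_of_single_eigenvalue {N : ℕ} (hd : 1 ≤ Module.finrank ℂ H)
    (α : Fin N → ℂ) (f g : Fin N → H) (hS : ∀ m, ⟪g m, f m⟫ = α m) :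
    ((∃ lam : ℂ, LinearMap.charpoly (mixedOp f g)
        = (X - C lam) ^ (Module.finrank ℂ H)) →
      mixedFP f g = (1 / (Module.finrank ℂ H : ℂ)) * (∑ m, α m) ^ 2) ∧
    ((mixedOp f g = ((1 / (Module.finrank ℂ H : ℂ)) * ∑ m, α m) • LinearMap.id) →
      mixedFP f g = (1 / (Module.finrank ℂ H : ℂ)) * (∑ m, α m) ^ 2) := by
  have hd0 : (Module.finrank ℂ H : ℂ) ≠ 0 := Nat.cast_ne_zero.mpr (by omega)
  have fp_of_isNilpotent : ∀ μ : ℂ, IsNilpotent (mixedOp f g - algebraMap ℂ _ μ) →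
      mixedFP f g = (1 / (Module.finrank ℂ H : ℂ)) * (∑ m, α m) ^ 2 := by
    intro μ hμ
    have h := Module.End.finrank_mul_trace_comp_self_of_isNilpotent_sub_algebraMap hμ
    rw [trace_mixedOp_comp_self, trace_mixedOp, Finset.sum_congr rfl fun m _ => hS m] at h
    rw [← h]
    field_simp
  refine ⟨fun ⟨μ, hμ⟩ =>
      fp_of_isNilpotent μ (Module.End.isNilpotent_sub_algebraMap_of_charpoly_eq hμ),
    fun h => fp_of_isNilpotent ((1 / (Module.finrank ℂ H : ℂ)) * ∑ m, α m) ?_⟩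
  rw [h, Algebra.algebraMap_eq_smul_one, Module.End.one_eq_id, sub_self]
  exact IsNilpotent.zero
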